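/- Mixed Jacobian-based inclusion function: under the hypotheses of the pointwise mixed Jacobian-based bound, the map F with [F(x̲,x̄)] = [M_O^{x°}(x̲,x̄)]([x̲,x̄] − x°) + f(x°) is an inclusion function for f, i.e., F̲(x̲,x̄) ≤ f(x) ≤ F̄(x̲,x̄) for all x ∈ [x̲,x̄]. -/

import Mathlib

/-!
Walk from `c` to `x` one coordinate at a time, in the order `o`. The step that moves
coordinate `j` stays in the box where the coordinates `o 0, …, j` range over `[xl, xu]`
and the others are frozen at `c`, which is exactly the box at which column `j` of the
mixed Jacobian is evaluated. The mean value theorem on each step therefore gives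
`f x - f c = ∑ j, d j * (x j - c j)` with `d j` in the `j`-th column interval, and each
term is bounded by interval multiplication.
-/

/-- Lower endpoint of the product of the real intervals `[al,ah]` and `[bl,bh]`. -/
def imulLo (al ah bl bh : ℝ) : ℝ :=
  min (min (al * bl) (al * bh)) (min (ah * bl) (ah * bh))

/-- Upper endpoint of the product of the real intervals `[al,ah]` and `[bl,bh]`. -/
def imulHi (al ah bl bh : ℝ) : ℝ :=
  max (max (al * bl) (al * bh)) (max (ah * bl) (ah * bh))

/-- The replacement `c_{O_k : y}`: for the ordering (permutation) `o`, replace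
the coordinates of `c` indexed by the first `k` elements `o 0, …, o (k-1)` of
the ordering by those of `y`. -/
def repl {n : ℕ} (o : Equiv.Perm (Fin n)) (k : ℕ) (c y : Fin n → ℝ) : Fin n → ℝ :=
  fun j => if (o.symm j : ℕ) < k then y j else c j

section IntervalProduct

variable {al a au bl b bu : ℝ}

lemma min_mul_le_mul (hal : al ≤ a) (hau : a ≤ au) (k : ℝ) :
    min (al * k) (au * k) ≤ a * k := by
  rcases le_total 0 k with hk | hk
  · exact min_le_of_left_le (mul_le_mul_of_nonneg_right hal hk)
  · exact min_le_of_right_le (mul_le_mul_of_nonpos_right hau hk)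

lemma mul_le_max_mul (hal : al ≤ a) (hau : a ≤ au) (k : ℝ) :
    a * k ≤ max (al * k) (au * k) := by
  rcases le_total 0 k with hk | hk
  · exact le_max_of_le_right (mul_le_mul_of_nonneg_right hau hk)
  · exact le_max_of_le_left (mul_le_mul_of_nonpos_right hal hk)

lemma imulLo_le_mul (ha : a ∈ Set.Icc al au) (hb : b ∈ Set.Icc bl bu) :
    imulLo al au bl bu ≤ a * b := by
  have hcorner : ∀ k, min (k * bl) (k * bu) ≤ k * b := fun k => by
    simpa only [mul_comm k] using min_mul_le_mul hb.1 hb.2 k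
  exact (min_le_min (hcorner al) (hcorner au)).trans (min_mul_le_mul ha.1 ha.2 b)

lemma mul_le_imulHi (ha : a ∈ Set.Icc al au) (hb : b ∈ Set.Icc bl bu) :
    a * b ≤ imulHi al au bl bu := by
  have hcorner : ∀ k, k * b ≤ max (k * bl) (k * bu) := fun k => by
    simpa only [mul_comm k] using mul_le_max_mul hb.1 hb.2 k
  exact (mul_le_max_mul ha.1 ha.2 b).trans (max_le_max (hcorner al) (hcorner au))

end IntervalProduct

section Replacement

variable {n : ℕ} (o : Equiv.Perm (Fin n)) (c : Fin n → ℝ)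

@[simp]
lemma repl_zero (y : Fin n → ℝ) : repl o 0 c y = c := by
  funext j
  simp [repl]

@[simp]
lemma repl_card (y : Fin n → ℝ) : repl o n c y = y := by
  funext j
  simp [repl]

lemma repl_succ (j : Fin n) (y : Fin n → ℝ) :
    repl o (o.symm j + 1) c y = repl o (o.symm j) c y + Pi.single j (y j - c j) := by
  funext l
  obtain rfl | hl := eq_or_ne l j
  · simp [repl]
  · have hne : (o.symm l : ℕ) ≠ o.symm j := fun h => hl (o.symm.injective (Fin.ext h))
    have hlt : (o.symm l : ℕ) < o.symm j + 1 ↔ (o.symm l : ℕ) < o.symm j := by omega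
    simp only [repl, Pi.add_apply, Pi.single_apply, hl, if_false, add_zero, hlt]

lemma repl_mem_Icc_repl {k k' : ℕ} (hk : k ≤ k') {xl xu y : Fin n → ℝ}
    (hc : c ∈ Set.Icc xl xu) (hy : y ∈ Set.Icc xl xu) :
    repl o k c y ∈ Set.Icc (repl o k' c xl) (repl o k' c xu) := by
  constructor <;> intro j <;> simp only [repl] <;> split_ifs <;> first
    | exact le_rfl | exact hy.1 j | exact hy.2 j | exact hc.1 j | exact hc.2 j | omega

lemma sum_repl_succ_sub_repl {β : Type*} [AddCommGroup β] (g : (Fin n → ℝ) → β)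
    (y : Fin n → ℝ) :
    ∑ j, (g (repl o (o.symm j + 1) c y) - g (repl o (o.symm j) c y)) = g y - g c := by
  rw [Equiv.sum_comp o.symm (fun k => g (repl o (k + 1) c y) - g (repl o k c y)),
    Fin.sum_univ_eq_sum_range (fun k => g (repl o (k + 1) c y) - g (repl o k c y)),
    Finset.sum_range_sub (fun k => g (repl o k c y)), repl_card, repl_zero]

end Replacement

lemma exists_mem_segment_sub_eq_fderiv_apply {E κ : Type*} [NormedAddCommGroup E]
    [NormedSpace ℝ E] [Fintype κ] {f : E → κ → ℝ} (hf : Differentiable ℝ f) (p v : E) (i : κ) :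
    ∃ z ∈ segment ℝ p (p + v), f (p + v) i - f p i = fderiv ℝ f z v i := by
  have hfi : ∀ z ∈ Set.univ, HasFDerivWithinAt (fun y => f y i)
      ((ContinuousLinearMap.proj i).comp (fderiv ℝ f z)) Set.univ z := fun z _ =>
    (hasFDerivAt_pi'.1 (hf z).hasFDerivAt i).hasFDerivWithinAt
  obtain ⟨z, hz, heq⟩ := domain_mvt hfi convex_univ (Set.mem_univ p) (Set.mem_univ (p + v))
  exact ⟨z, hz, by simpa using heq⟩

lemma exists_mem_Icc_repl_succ_sub_repl_eq_mul {n m : ℕ} {f : (Fin n → ℝ) → Fin m → ℝ}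
    (hf : Differentiable ℝ f) (o : Equiv.Perm (Fin n)) {xl xu c x : Fin n → ℝ}
    (hc : c ∈ Set.Icc xl xu) (hx : x ∈ Set.Icc xl xu) (j : Fin n) (i : Fin m) {lo hi : ℝ}
    (hbound : ∀ y ∈ Set.Icc (repl o (o.symm j + 1) c xl) (repl o (o.symm j + 1) c xu),
      fderiv ℝ f y (Pi.single j 1) i ∈ Set.Icc lo hi) :
    ∃ d ∈ Set.Icc lo hi,
      f (repl o (o.symm j + 1) c x) i - f (repl o (o.symm j) c x) i = d * (x j - c j) := by
  obtain ⟨z, hz, heq⟩ := exists_mem_segment_sub_eq_fderiv_apply hf (repl o (o.symm j) c x)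
    (Pi.single j (x j - c j)) i
  rw [← repl_succ] at hz heq
  have hzbox := (convex_Icc _ _).segment_subset
    (repl_mem_Icc_repl o c (Nat.le_succ _) hc hx) (repl_mem_Icc_repl o c le_rfl hc hx) hz
  refine ⟨fderiv ℝ f z (Pi.single j 1) i, hbound z hzbox, ?_⟩
  rw [heq, ← mul_one (x j - c j), ← smul_eq_mul, Pi.single_smul', map_smul]
  simp [mul_comm]

theorem mixed_jacobian_inclusion_function_general {n m : ℕ}
    (f : (Fin n → ℝ) → (Fin m → ℝ)) (hf : ContDiff ℝ 1 f)
    (Jlo Jhi : (Fin n → ℝ) → (Fin n → ℝ) → Matrix (Fin m) (Fin n) ℝ)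
    (hJ : ∀ al au : Fin n → ℝ, al ≤ au → ∀ y ∈ Set.Icc al au, ∀ i j,
      Jlo al au i j ≤ fderiv ℝ f y (Pi.single j 1) i ∧
        fderiv ℝ f y (Pi.single j 1) i ≤ Jhi al au i j)
    (xl xu : Fin n → ℝ)
    (c : Fin n → ℝ) (hc : c ∈ Set.Icc xl xu)
    (o : Equiv.Perm (Fin n))
    (Mlo Mhi : Matrix (Fin m) (Fin n) ℝ)
    (hMlo : ∀ i j, Mlo i j =
      Jlo (repl o ((o.symm j : ℕ) + 1) c xl) (repl o ((o.symm j : ℕ) + 1) c xu) i j)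
    (hMhi : ∀ i j, Mhi i j =
      Jhi (repl o ((o.symm j : ℕ) + 1) c xl) (repl o ((o.symm j : ℕ) + 1) c xu) i j)
    (x : Fin n → ℝ) (hmem : x ∈ Set.Icc xl xu) (i : Fin m) :
    (∑ j, imulLo (Mlo i j) (Mhi i j) (xl j - c j) (xu j - c j)) + f c i ≤ f x i ∧
      f x i ≤ (∑ j, imulHi (Mlo i j) (Mhi i j) (xl j - c j) (xu j - c j)) + f c i := by
  have hstep : ∀ j, ∃ d ∈ Set.Icc (Mlo i j) (Mhi i j),
      f (repl o (o.symm j + 1) c x) i - f (repl o (o.symm j) c x) i = d * (x j - c j) :=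
    fun j => exists_mem_Icc_repl_succ_sub_repl_eq_mul (hf.differentiable one_ne_zero) o hc hmem
      j i fun y hy => by
        rw [hMlo, hMhi]
        exact hJ _ _ (hy.1.trans hy.2) y hy i j
  choose d hd hd_eq using hstep
  have hsum : f x i - f c i = ∑ j, d j * (x j - c j) := by
    rw [← sum_repl_succ_sub_repl o c (fun y => f y i) x]
    exact Finset.sum_congr rfl fun j _ => hd_eq j
  have hxc : ∀ j, x j - c j ∈ Set.Icc (xl j - c j) (xu j - c j) := fun j =>
    ⟨sub_le_sub_right (hmem.1 j) _, sub_le_sub_right (hmem.2 j) _⟩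
  constructor
  · have := Finset.sum_le_sum fun j (_ : j ∈ Finset.univ) => imulLo_le_mul (hd j) (hxc j)
    linarith
  · have := Finset.sum_le_sum fun j (_ : j ∈ Finset.univ) => mul_le_imulHi (hd j) (hxc j)
    linarith

/-- Mixed Jacobian-based inclusion function: the map `F` with
`[F(xl,xu)] = [M_O^c(xl,xu)]([xl,xu] − c) + f c` is an inclusion function for
`f`, i.e. `F̲(xl,xu) ≤ f x ≤ F̄(xl,xu)` for all `x ∈ [xl,xu]`. -/
theorem mixed_jacobian_inclusion_function {n m : ℕ}
    (f : (Fin n → ℝ) → (Fin m → ℝ)) (hf : ContDiff ℝ 1 f)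
    (Jlo Jhi : (Fin n → ℝ) → (Fin n → ℝ) → Matrix (Fin m) (Fin n) ℝ)
    (hJ : ∀ al au : Fin n → ℝ, al ≤ au → ∀ y ∈ Set.Icc al au, ∀ i j,
      Jlo al au i j ≤ fderiv ℝ f y (Pi.single j 1) i ∧
        fderiv ℝ f y (Pi.single j 1) i ≤ Jhi al au i j)
    (xl xu : Fin n → ℝ) (hx : xl ≤ xu)
    (c : Fin n → ℝ) (hc : c ∈ Set.Icc xl xu)
    (o : Equiv.Perm (Fin n))
    (Mlo Mhi : Matrix (Fin m) (Fin n) ℝ)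
    (hMlo : ∀ i j, Mlo i j =
      Jlo (repl o ((o.symm j : ℕ) + 1) c xl) (repl o ((o.symm j : ℕ) + 1) c xu) i j)
    (hMhi : ∀ i j, Mhi i j =
      Jhi (repl o ((o.symm j : ℕ) + 1) c xl) (repl o ((o.symm j : ℕ) + 1) c xu) i j)
    (x : Fin n → ℝ) (hmem : x ∈ Set.Icc xl xu) (i : Fin m) :
    (∑ j, imulLo (Mlo i j) (Mhi i j) (xl j - c j) (xu j - c j)) + f c i ≤ f x i ∧
      f x i ≤ (∑ j, imulHi (Mlo i j) (Mhi i j) (xl j - c j) (xu j - c j)) + f c i :=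
  mixed_jacobian_inclusion_function_general f hf Jlo Jhi hJ xl xu c hc o Mlo Mhi hMlo hMhi x hmem i
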